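/- Let f be a vertex of the polytope P(Q). For every node b of the nice tree decomposition T, there exist a positive integer M and binary vectors I_1, I_2, …, I_M ∈ {0,1}^(ℛ(b)), some possibly identical, such that (♠) every I_i satisfies the constraints relevant to T(b), and (♣) f|_b = (1/M) Σ_{i=1}^M I_i. -/

import Mathlib

/-! Common definitions: CSP instances, configurations, nice tree decompositions,
and the polytopes from Kolman–Koutecký. -/

/-- A constraint with scope `scope`; its satisfaction depends only on the
coordinates in the scope (it is a relation on the domains of the scope). -/
structure CSPConstraint (n : ℕ) where
  scope : Finset (Fin n)
  sat : (Fin n → ℝ) → Prop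
  sat_congr : ∀ z z' : Fin n → ℝ, (∀ v ∈ scope, z v = z' v) → sat z → sat z'

/-- A CSP instance: finite real domains, hard constraints and soft constraints. -/
structure CSPInstance (n : ℕ) where
  dom : Fin n → Finset ℝ
  hard : List (CSPConstraint n)
  soft : List (CSPConstraint n)

variable {n : ℕ}

/-- The list of all constraints (hard and soft). -/
def consList (Q : CSPInstance n) : List (CSPConstraint n) := Q.hard ++ Q.soft

/-- A feasible assignment: values in the domains, satisfying all hard constraints. -/
def Feasible (Q : CSPInstance n) (z : Fin n → ℝ) : Prop :=
  (∀ v, z v ∈ Q.dom v) ∧ ∀ C ∈ Q.hard, C.sat z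

-- Configurations of a set `W` of variables: partial assignments (with `none`
-- playing the role of the symbol `λ`) defined exactly on `W`.
open Classical in
noncomputable def configs (Q : CSPInstance n) (W : Finset (Fin n)) :
    Finset (Fin n → Option ℝ) :=
  (Fintype.piFinset fun v =>
      if v ∈ W then (Q.dom v).image some else ({none} : Finset (Option ℝ))).filter
    (fun K => ∀ C ∈ Q.hard, C.scope ⊆ W → C.sat (fun v => (K v).getD 0))

/-- Restriction `K↾_W` of a configuration: coordinates outside `W` are set to `λ`. -/
def restrictCfg (K : Fin n → Option ℝ) (W : Finset (Fin n)) : Fin n → Option ℝ :=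
  fun v => if v ∈ W then K v else none

/-- A (rooted) nice tree: leaves, introduce nodes, forget nodes and join nodes. -/
inductive NiceTree (n : ℕ) : Type
  | leaf (v : Fin n) : NiceTree n
  | introduce (v : Fin n) (t : NiceTree n) : NiceTree n
  | forget (v : Fin n) (t : NiceTree n) : NiceTree n
  | join (t₁ t₂ : NiceTree n) : NiceTree n

namespace NiceTree

/-- The bag of the root node of a nice tree. -/
def bag : NiceTree n → Finset (Fin n)
  | leaf v => {v}
  | introduce v t => insert v (bag t)
  | forget v t => (bag t).erase v
  | join t₁ _ => bag t₁

/-- All vertices appearing in bags of the tree. -/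
def verts : NiceTree n → Finset (Fin n)
  | leaf v => {v}
  | introduce v t => insert v (verts t)
  | forget _ t => verts t
  | join t₁ t₂ => verts t₁ ∪ verts t₂

/-- Number of nodes of the tree. -/
def size : NiceTree n → ℕ
  | leaf _ => 1
  | introduce _ t => size t + 1
  | forget _ t => size t + 1
  | join t₁ t₂ => size t₁ + size t₂ + 1

/-- Structural validity of a nice tree (in particular, the connectivity
condition of tree decompositions: an introduced vertex does not occur below,
and vertices shared by the two subtrees of a join lie in its bag). -/
def valid : NiceTree n → Prop
  | leaf _ => True
  | introduce v t => v ∉ verts t ∧ valid t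
  | forget v t => v ∈ bag t ∧ valid t
  | join t₁ t₂ => bag t₁ = bag t₂ ∧ verts t₁ ∩ verts t₂ ⊆ bag t₁ ∧ valid t₁ ∧ valid t₂

/-- `isSubtree s t`: `s` is a node (subtree) of `t`. -/
def isSubtree (s : NiceTree n) : NiceTree n → Prop
  | leaf v => s = leaf v
  | introduce v t => s = introduce v t ∨ isSubtree s t
  | forget v t => s = forget v t ∨ isSubtree s t
  | join t₁ t₂ => s = join t₁ t₂ ∨ isSubtree s t₁ ∨ isSubtree s t₂

-- The configurations relevant to the subtree: `ℛ(a) = ⋃_{b ∈ T(a)} 𝒦(B(b))`.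
open Classical in
noncomputable def relConfigs (Q : CSPInstance n) : NiceTree n → Finset (Fin n → Option ℝ)
  | leaf v => configs Q {v}
  | introduce v t => configs Q (insert v (bag t)) ∪ relConfigs Q t
  | forget v t => configs Q ((bag t).erase v) ∪ relConfigs Q t
  | join t₁ t₂ => relConfigs Q t₁ ∪ relConfigs Q t₂

end NiceTree

/-- A valid nice tree decomposition for the CSP instance `Q`: every variable is
in some bag and every constraint scope is contained in some bag. -/
def IsNiceTreeDecompCSP (Q : CSPInstance n) (T : NiceTree n) : Prop :=
  T.valid ∧ (∀ v : Fin n, v ∈ T.verts) ∧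
    ∀ C ∈ consList Q, ∃ s : NiceTree n, s.isSubtree T ∧ C.scope ⊆ s.bag

/-- A valid nice tree decomposition of a graph `G`: every vertex is in some bag
and both endpoints of every edge lie in a common bag. -/
def IsNiceTreeDecompGraph (G : SimpleGraph (Fin n)) (T : NiceTree n) : Prop :=
  T.valid ∧ (∀ v : Fin n, v ∈ T.verts) ∧
    ∀ u v : Fin n, G.Adj u v → ∃ s : NiceTree n, s.isSubtree T ∧ u ∈ s.bag ∧ v ∈ s.bag

/-- The constraint graph of a CSP instance. -/
def constraintGraph (Q : CSPInstance n) : SimpleGraph (Fin n) where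
  Adj u v := u ≠ v ∧ ∃ C ∈ consList Q, u ∈ C.scope ∧ v ∈ C.scope
  symm := by
    constructor
    rintro u v ⟨hne, C, hC, hu, hv⟩
    exact ⟨hne.symm, C, hC, hv, hu⟩
  loopless := by
    constructor
    rintro v ⟨hne, -⟩
    exact hne rfl

-- The LP constraints of `P(Q)` relevant to the subtree `t`: bag equations and
-- consistency equations at introduce and forget nodes of `t`.
def RelCons (Q : CSPInstance n) (f : (Fin n → Option ℝ) → ℝ) : NiceTree n → Prop
  | .leaf v => ∑ K ∈ configs Q {v}, f K = 1
  | .introduce v t =>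
      RelCons Q f t ∧ (∑ K ∈ configs Q (insert v t.bag), f K = 1) ∧
      ∀ K ∈ configs Q t.bag,
        ∑ K' ∈ (configs Q (insert v t.bag)).filter
            (fun K' => restrictCfg K' t.bag = K), f K' = f K
  | .forget v t =>
      RelCons Q f t ∧ (∑ K ∈ configs Q (t.bag.erase v), f K = 1) ∧
      ∀ K ∈ configs Q (t.bag.erase v),
        ∑ K' ∈ (configs Q t.bag).filter
            (fun K' => restrictCfg K' (t.bag.erase v) = K), f K' = f K
  | .join t₁ t₂ => RelCons Q f t₁ ∧ RelCons Q f t₂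

/-- All the constraints of `P(Q)` relevant to the subtree `t`, including the
bounds `0 ≤ f(K) ≤ 1` for relevant configurations. -/
def RelevantLP (Q : CSPInstance n) (t : NiceTree n) (f : (Fin n → Option ℝ) → ℝ) : Prop :=
  RelCons Q f t ∧ ∀ K ∈ t.relConfigs Q, 0 ≤ f K ∧ f K ≤ 1

/-- The polytope `P(Q) ⊆ ℝ^{𝒦_ℬ}` (coordinates outside `𝒦_ℬ` are zero). -/
def Ppoly (Q : CSPInstance n) (T : NiceTree n) : Set ((Fin n → Option ℝ) → ℝ) :=
  {f | RelevantLP Q T f ∧ ∀ K, K ∉ T.relConfigs Q → f K = 0}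

/-- Extended feasible assignments `(z, h)`. -/
def ExtAssignments (Q : CSPInstance n) :
    Set ((Fin n → ℝ) × (Fin Q.soft.length → ℝ)) :=
  {p | Feasible Q p.1 ∧ ∀ i : Fin Q.soft.length,
      ((Q.soft.get i).sat p.1 ∧ p.2 i = 1) ∨ (¬ (Q.soft.get i).sat p.1 ∧ p.2 i = 0)}

/-- `CSP(Q)`: the convex hull of all extended feasible assignments. -/
def CSPpolytope (Q : CSPInstance n) : Set ((Fin n → ℝ) × (Fin Q.soft.length → ℝ)) :=
  convexHull ℝ (ExtAssignments Q)

/-- `CSP'(Q)`: the convex hull of all feasible assignments. -/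
def CSPpolytope' (Q : CSPInstance n) : Set (Fin n → ℝ) :=
  convexHull ℝ {z | Feasible Q z}

/-- The `y`-variables of the basic LP: one for each `v ∈ V` and `i ∈ D_v`. -/
abbrev YType (Q : CSPInstance n) := (v : Fin n) → {i : ℝ // i ∈ Q.dom v} → ℝ

/-- The `g`-variables of the basic LP: one for each constraint `C_U ∈ 𝒞 ∪ ℋ`
and each configuration `K ∈ 𝒦(U)`. -/
abbrev GType (Q : CSPInstance n) :=
  (c : Fin (consList Q).length) →
    {K : Fin n → Option ℝ // K ∈ configs Q ((consList Q).get c).scope} → ℝ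

/-- The basic LP (1)–(3). -/
def BasicLP (Q : CSPInstance n) (p : YType Q × GType Q) : Prop :=
  (∀ v : Fin n, ∑ i ∈ (Q.dom v).attach, p.1 v i = 1) ∧
  (∀ c : Fin (consList Q).length, ∀ v ∈ ((consList Q).get c).scope,
    ∀ (i : ℝ) (hi : i ∈ Q.dom v),
      ∑ K ∈ (configs Q ((consList Q).get c).scope).attach.filter
          (fun K => K.1 v = some i), p.2 c K = p.1 v ⟨i, hi⟩) ∧
  (∀ v i, 0 ≤ p.1 v i ∧ p.1 v i ≤ 1) ∧ (∀ c K, 0 ≤ p.2 c K ∧ p.2 c K ≤ 1)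

/-- Integrality (all coordinates in `{0,1}`) of a `(y, g)` vector. -/
def IntegralYG (Q : CSPInstance n) (p : YType Q × GType Q) : Prop :=
  (∀ v i, p.1 v i = 0 ∨ p.1 v i = 1) ∧ ∀ c K, p.2 c K = 0 ∨ p.2 c K = 1

-- The map sending a (feasible) assignment `z` to the `(y, g)` vector of the basic LP.
open Classical in
noncomputable def exMap (Q : CSPInstance n) (z : Fin n → ℝ) : YType Q × GType Q :=
  (fun v i => if z v = i.1 then 1 else 0,
   fun c K => if ∀ u ∈ ((consList Q).get c).scope, K.1 u = some (z u) then 1 else 0)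

/-!
A vertex `f` of `P(Q)` is the only point satisfying the equations of `P(Q)` together with its
tight bounds `f K = 0` and `f K = 1`. This is a linear system with rational coefficients, so `f`
is rational, and `M • f` is integral for a common denominator `M`. Bottom-up along `T(b)` one
then builds `M` assignments `z 1, …, z M` of the variables such that every relevant
configuration `K` agrees with exactly `M * f K` of them: at an introduce node the assignments
inducing a given configuration of the child bag are split according to the consistency
equations, a forget node needs nothing, and at a join node the two families are matched by a
permutation aligning their configurations on the common bag. The `I i` are the characteristic
vectors of the `z i`.
-/

open Finset

section RatLinearSystem

variable {α : Type*}

def IsRatLinearDefinable (P : (α → ℝ) → Prop) : Prop :=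
  ∃ L : Set ((α →₀ ℚ) × ℚ), ∀ x, P x ↔ ∀ p ∈ L, Finsupp.linearCombination ℚ x p.1 = p.2

namespace IsRatLinearDefinable

variable {P P' : (α → ℝ) → Prop}

lemma of_iff (hP : IsRatLinearDefinable P) (h : ∀ x, P x ↔ P' x) : IsRatLinearDefinable P' := by
  obtain ⟨L, hL⟩ := hP
  exact ⟨L, fun x => (h x).symm.trans (hL x)⟩

lemma linearCombination_eq (w : α →₀ ℚ) (c : ℚ) :
    IsRatLinearDefinable fun x => Finsupp.linearCombination ℚ x w = c :=
  ⟨{(w, c)}, fun x => by simp⟩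

lemma and (hP : IsRatLinearDefinable P) (hP' : IsRatLinearDefinable P') :
    IsRatLinearDefinable fun x => P x ∧ P' x := by
  obtain ⟨L, hL⟩ := hP
  obtain ⟨L', hL'⟩ := hP'
  refine ⟨L ∪ L', fun x => ?_⟩
  simp only [hL, hL', Set.mem_union]
  aesop

lemma all {ι : Sort*} {P : ι → (α → ℝ) → Prop} (hP : ∀ i, IsRatLinearDefinable (P i)) :
    IsRatLinearDefinable fun x => ∀ i, P i x := by
  choose L hL using hP
  refine ⟨⋃ i, L i, fun x => ?_⟩
  simp only [hL, Set.mem_iUnion]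
  aesop

lemma apply_eq (a : α) (c : ℚ) : IsRatLinearDefinable fun x => x a = c :=
  (linearCombination_eq (Finsupp.single a 1) c).of_iff fun x => by simp

lemma sum_eq (s : Finset α) (c : ℚ) : IsRatLinearDefinable fun x => ∑ a ∈ s, x a = c :=
  (linearCombination_eq (∑ a ∈ s, Finsupp.single a 1) c).of_iff fun x => by simp

lemma sum_eq_apply (s : Finset α) (b : α) :
    IsRatLinearDefinable fun x => ∑ a ∈ s, x a = x b :=
  (linearCombination_eq (∑ a ∈ s, Finsupp.single a 1 - Finsupp.single b 1) 0).of_iff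
    fun x => by simp [sub_eq_zero]

/-- A unique real solution of a rational linear system is rational: otherwise some unit vector
is not a rational combination of the equations, and a rational functional separating it gives
a second solution. -/
lemma exists_rat_of_unique {x₀ : α → ℝ} (hP : IsRatLinearDefinable P) (h : ∀ x, P x ↔ x = x₀)
    (a : α) : ∃ q : ℚ, x₀ a = q := by
  obtain ⟨L, hL⟩ := hP
  have hx₀ : ∀ p ∈ L, Finsupp.linearCombination ℚ x₀ p.1 = p.2 := (hL x₀).1 ((h x₀).2 rfl)
  set U := Submodule.span ℚ (Prod.fst '' L)
  have hsingle : Finsupp.single a 1 ∈ U := by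
    by_contra hnot
    obtain ⟨φ, hφa, hφU⟩ := Submodule.exists_dual_map_eq_bot_of_notMem hnot inferInstance
    let y : α → ℝ := fun b => φ (Finsupp.single b 1)
    have hy : Finsupp.linearCombination ℚ y = Algebra.linearMap ℚ ℝ ∘ₗ φ :=
      Finsupp.lhom_ext fun b q => by
        rw [Finsupp.linearCombination_single, LinearMap.comp_apply,
          ← Finsupp.smul_single_one b q, map_smul]
        simp [y, Rat.smul_def]
    have hsol : P (x₀ + y) := (hL _).2 fun p hp => by
      have hφp : φ p.1 = 0 := by
        rw [← Submodule.mem_bot ℚ, ← hφU]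
        exact Submodule.mem_map_of_mem (Submodule.subset_span ⟨p, hp, rfl⟩)
      calc Finsupp.linearCombination ℚ (x₀ + y) p.1
          = Finsupp.linearCombination ℚ x₀ p.1 + Finsupp.linearCombination ℚ y p.1 := by
            simp only [Finsupp.linearCombination_apply, Pi.add_apply, smul_add, Finsupp.sum_add]
        _ = p.2 := by rw [hy, LinearMap.comp_apply, hφp, map_zero, add_zero, hx₀ p hp]
    have hya : y a = 0 := by simpa using congrFun ((h _).1 hsol) a
    exact hφa (Rat.cast_eq_zero.1 hya)
  have hrat : U ≤ (LinearMap.range (Algebra.linearMap ℚ ℝ)).comap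
      (Finsupp.linearCombination ℚ x₀) := by
    refine Submodule.span_le.2 ?_
    rintro _ ⟨p, hp, rfl⟩
    exact ⟨p.2, (hx₀ p hp).symm⟩
  obtain ⟨q, hq⟩ := hrat hsingle
  exact ⟨q, by simpa using hq.symm⟩

end IsRatLinearDefinable

end RatLinearSystem

section Configurations

variable {Q : CSPInstance n} {W W' : Finset (Fin n)} {K : Fin n → Option ℝ}

lemma mem_configs_iff :
    K ∈ configs Q W ↔
      (∀ v, (v ∈ W → ∃ r ∈ Q.dom v, K v = some r) ∧ (v ∉ W → K v = none)) ∧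
      ∀ C ∈ Q.hard, C.scope ⊆ W → C.sat (fun v => (K v).getD 0) := by
  classical
  unfold configs
  rw [Finset.mem_filter, Fintype.mem_piFinset]
  refine and_congr_left' (forall_congr' fun v => ?_)
  by_cases hv : v ∈ W <;> simp [hv, eq_comm]

lemma configs_apply_eq_none_iff (hK : K ∈ configs Q W) (v : Fin n) : K v = none ↔ v ∉ W := by
  obtain ⟨hKv, -⟩ := mem_configs_iff.1 hK
  refine ⟨fun h hv => ?_, (hKv v).2⟩
  obtain ⟨r, -, hr⟩ := (hKv v).1 hv
  simp [h] at hr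

lemma mem_of_apply_ne_none (hK : K ∈ configs Q W) {v : Fin n} (h : K v ≠ none) : v ∈ W :=
  not_not.1 (mt (configs_apply_eq_none_iff hK v).2 h)

lemma restrictCfg_mem_configs (hWW : W ⊆ W') (hK : K ∈ configs Q W') :
    restrictCfg K W ∈ configs Q W := by
  obtain ⟨hKv, hKsat⟩ := mem_configs_iff.1 hK
  refine mem_configs_iff.2 ⟨fun v => ⟨fun hv => ?_, fun hv => if_neg hv⟩, fun C hC hCW => ?_⟩
  · simpa [restrictCfg, hv] using (hKv v).1 (hWW hv)
  · refine C.sat_congr _ _ (fun v hv => ?_) (hKsat C hC (hCW.trans hWW))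
    simp [restrictCfg, hCW hv]

end Configurations

section Assignments

variable {Q : CSPInstance n} {W W' : Finset (Fin n)} {K : Fin n → Option ℝ} {z z' : Fin n → ℝ}

def cfgOf (z : Fin n → ℝ) (W : Finset (Fin n)) : Fin n → Option ℝ :=
  fun v => if v ∈ W then some (z v) else none

noncomputable def charVec (z : Fin n → ℝ) (K : Fin n → Option ℝ) : ℝ :=
  if ∀ v, K v ≠ none → K v = some (z v) then 1 else 0

lemma restrictCfg_cfgOf (h : W ⊆ W') : restrictCfg (cfgOf z W') W = cfgOf z W := by
  funext v
  by_cases hv : v ∈ W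
  · simp [restrictCfg, cfgOf, hv, h hv]
  · simp [restrictCfg, cfgOf, hv]

lemma cfgOf_congr (h : ∀ v ∈ W, z v = z' v) : cfgOf z W = cfgOf z' W := by
  funext v
  by_cases hv : v ∈ W
  · simp [cfgOf, hv, h v hv]
  · simp [cfgOf, hv]

lemma cfgOf_getD (hK : K ∈ configs Q W) : cfgOf (fun v => (K v).getD 0) W = K := by
  funext v
  by_cases hv : v ∈ W
  · obtain ⟨r, -, hr⟩ := ((mem_configs_iff.1 hK).1 v).1 hv
    simp [cfgOf, hv, hr]
  · simp [cfgOf, hv, (configs_apply_eq_none_iff hK v).2 hv]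

lemma charVec_eq_zero_or_one (z : Fin n → ℝ) (K : Fin n → Option ℝ) :
    charVec z K = 0 ∨ charVec z K = 1 := by
  unfold charVec
  split_ifs <;> simp

lemma charVec_congr (h : ∀ v, K v ≠ none → z v = z' v) : charVec z K = charVec z' K := by
  unfold charVec
  congr 1
  exact propext (forall_congr' fun v => imp_congr_right fun hv => by rw [h v hv])

lemma charVec_eq_ite (hK : K ∈ configs Q W) : charVec z K = if cfgOf z W = K then 1 else 0 := by
  unfold charVec
  congr 1
  refine propext ⟨fun h => funext fun v => ?_, ?_⟩
  · by_cases hv : v ∈ W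
    · have hKv : K v ≠ none := by rwa [Ne, configs_apply_eq_none_iff hK, not_not]
      simp [cfgOf, hv, h v hKv]
    · simp [cfgOf, hv, (configs_apply_eq_none_iff hK v).2 hv]
  · rintro rfl v hv
    by_cases hvW : v ∈ W <;> simp_all [cfgOf]

lemma sum_charVec_configs (hz : cfgOf z W ∈ configs Q W) :
    ∑ K ∈ configs Q W, charVec z K = 1 := by
  rw [Finset.sum_congr rfl fun K hK => charVec_eq_ite hK, Finset.sum_ite_eq, if_pos hz]

lemma sum_charVec_restrict (hWW : W ⊆ W') (hz : cfgOf z W' ∈ configs Q W')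
    (hK : K ∈ configs Q W) :
    ∑ K' ∈ configs Q W' with restrictCfg K' W = K, charVec z K' = charVec z K := by
  rw [Finset.sum_congr rfl fun K' hK' => charVec_eq_ite (Finset.mem_filter.1 hK').1,
    Finset.sum_ite_eq, charVec_eq_ite hK]
  simp only [Finset.mem_filter, restrictCfg_cfgOf hWW, hz, true_and]

lemma sum_charVec_eq_card {ι : Type*} [Fintype ι] (hK : K ∈ configs Q W) (z : ι → Fin n → ℝ) :
    ∑ i, charVec (z i) K = #{i | cfgOf (z i) W = K} := by
  simp [charVec_eq_ite hK, Finset.sum_boole]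

end Assignments

namespace NiceTree

variable {Q : CSPInstance n} {s b : NiceTree n}

lemma isSubtree_self (b : NiceTree n) : b.isSubtree b := by
  cases b <;> simp [isSubtree]

lemma bag_subset_verts (b : NiceTree n) : b.bag ⊆ b.verts := by
  induction b with
  | leaf v => simp [bag, verts]
  | introduce v t ih => exact Finset.insert_subset_insert v ih
  | forget v t ih => exact (Finset.erase_subset v _).trans ih
  | join t₁ t₂ ih₁ _ => exact ih₁.trans Finset.subset_union_left

lemma verts_subset_of_isSubtree (h : s.isSubtree b) : s.verts ⊆ b.verts := by
  induction b with
  | leaf v => rw [show s = leaf v from h]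
  | introduce v t ih =>
    rcases h with rfl | h
    exacts [subset_rfl, (ih h).trans (Finset.subset_insert _ _)]
  | forget v t ih =>
    rcases h with rfl | h
    exacts [subset_rfl, ih h]
  | join t₁ t₂ ih₁ ih₂ =>
    rcases h with rfl | h | h
    exacts [subset_rfl, (ih₁ h).trans Finset.subset_union_left,
      (ih₂ h).trans Finset.subset_union_right]

lemma bag_subset_verts_of_isSubtree (h : s.isSubtree b) : s.bag ⊆ b.verts :=
  (bag_subset_verts s).trans (verts_subset_of_isSubtree h)

lemma valid_of_isSubtree (h : s.isSubtree b) (hb : b.valid) : s.valid := by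
  induction b with
  | leaf v => rwa [show s = leaf v from h]
  | introduce v t ih =>
    rcases h with rfl | h
    exacts [hb, ih h hb.2]
  | forget v t ih =>
    rcases h with rfl | h
    exacts [hb, ih h hb.2]
  | join t₁ t₂ ih₁ ih₂ =>
    rcases h with rfl | h | h
    exacts [hb, ih₁ h hb.2.2.1, ih₂ h hb.2.2.2]

lemma relConfigs_subset_of_isSubtree (h : s.isSubtree b) : s.relConfigs Q ⊆ b.relConfigs Q := by
  induction b with
  | leaf v => rw [show s = leaf v from h]
  | introduce v t ih =>
    rcases h with rfl | h
    exacts [subset_rfl, (ih h).trans Finset.subset_union_right]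
  | forget v t ih =>
    rcases h with rfl | h
    exacts [subset_rfl, (ih h).trans Finset.subset_union_right]
  | join t₁ t₂ ih₁ ih₂ =>
    rcases h with rfl | h | h
    exacts [subset_rfl, (ih₁ h).trans Finset.subset_union_left,
      (ih₂ h).trans Finset.subset_union_right]

lemma configs_bag_subset_relConfigs (Q : CSPInstance n) (b : NiceTree n) :
    configs Q b.bag ⊆ b.relConfigs Q := by
  induction b with
  | leaf v => exact subset_rfl
  | introduce v t ih => exact Finset.subset_union_left
  | forget v t ih => exact Finset.subset_union_left
  | join t₁ t₂ ih₁ _ => exact ih₁.trans Finset.subset_union_left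

lemma exists_isSubtree_of_mem_relConfigs {K : Fin n → Option ℝ} (h : K ∈ b.relConfigs Q) :
    ∃ s : NiceTree n, s.isSubtree b ∧ K ∈ configs Q s.bag := by
  induction b with
  | leaf v => exact ⟨leaf v, isSubtree_self _, h⟩
  | introduce v t ih =>
    rcases Finset.mem_union.1 h with h | h
    · exact ⟨introduce v t, isSubtree_self _, h⟩
    · obtain ⟨s, hs, hK⟩ := ih h
      exact ⟨s, Or.inr hs, hK⟩
  | forget v t ih =>
    rcases Finset.mem_union.1 h with h | h
    · exact ⟨forget v t, isSubtree_self _, h⟩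
    · obtain ⟨s, hs, hK⟩ := ih h
      exact ⟨s, Or.inr hs, hK⟩
  | join t₁ t₂ ih₁ ih₂ =>
    rcases Finset.mem_union.1 h with h | h
    · obtain ⟨s, hs, hK⟩ := ih₁ h
      exact ⟨s, Or.inr (Or.inl hs), hK⟩
    · obtain ⟨s, hs, hK⟩ := ih₂ h
      exact ⟨s, Or.inr (Or.inr hs), hK⟩

end NiceTree

open NiceTree

section RelCons

variable {Q : CSPInstance n} {f g : (Fin n → Option ℝ) → ℝ} {s b : NiceTree n}

lemma RelCons.of_isSubtree (h : s.isSubtree b) (hb : RelCons Q f b) : RelCons Q f s := by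
  induction b with
  | leaf v => rwa [show s = leaf v from h]
  | introduce v t ih =>
    rcases h with rfl | h
    exacts [hb, ih h hb.1]
  | forget v t ih =>
    rcases h with rfl | h
    exacts [hb, ih h hb.1]
  | join t₁ t₂ ih₁ ih₂ =>
    rcases h with rfl | h | h
    exacts [hb, ih₁ h hb.1, ih₂ h hb.2]

lemma RelCons.affineCombination {a c : ℝ} (hac : a + c = 1) (hf : RelCons Q f b)
    (hg : RelCons Q g b) : RelCons Q (a • f + c • g) b := by
  have hsum : ∀ F : Finset (Fin n → Option ℝ),
      ∑ K ∈ F, (a • f + c • g) K = a * ∑ K ∈ F, f K + c * ∑ K ∈ F, g K := fun F => by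
    simp [Finset.sum_add_distrib, Finset.mul_sum]
  induction b with
  | leaf v =>
    simp only [RelCons] at hf hg ⊢
    rw [hsum, hf, hg, mul_one, mul_one, hac]
  | introduce v t ih =>
    obtain ⟨hf₀, hf₁, hf₂⟩ := hf
    obtain ⟨hg₀, hg₁, hg₂⟩ := hg
    exact ⟨ih hf₀ hg₀, by rw [hsum, hf₁, hg₁, mul_one, mul_one, hac],
      fun K hK => by rw [hsum, hf₂ K hK, hg₂ K hK]; simp⟩
  | forget v t ih =>
    obtain ⟨hf₀, hf₁, hf₂⟩ := hf
    obtain ⟨hg₀, hg₁, hg₂⟩ := hg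
    exact ⟨ih hf₀ hg₀, by rw [hsum, hf₁, hg₁, mul_one, mul_one, hac],
      fun K hK => by rw [hsum, hf₂ K hK, hg₂ K hK]; simp⟩
  | join t₁ t₂ ih₁ ih₂ => exact ⟨ih₁ hf.1 hg.1, ih₂ hf.2 hg.2⟩

def BagFeasible (Q : CSPInstance n) (b : NiceTree n) (z : Fin n → ℝ) : Prop :=
  ∀ s : NiceTree n, s.isSubtree b → cfgOf z s.bag ∈ configs Q s.bag

lemma relCons_charVec {z : Fin n → ℝ} (hz : BagFeasible Q b z) : RelCons Q (charVec z) b := by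
  induction b with
  | leaf v => exact sum_charVec_configs (hz (leaf v) (isSubtree_self _))
  | introduce v t ih =>
    have hroot := hz (introduce v t) (isSubtree_self _)
    exact ⟨ih fun s hs => hz s (Or.inr hs), sum_charVec_configs hroot,
      fun K hK => sum_charVec_restrict (Finset.subset_insert v _) hroot hK⟩
  | forget v t ih =>
    exact ⟨ih fun s hs => hz s (Or.inr hs),
      sum_charVec_configs (hz (forget v t) (isSubtree_self _)),
      fun K hK => sum_charVec_restrict (Finset.erase_subset v _)
        (hz t (Or.inr (isSubtree_self t))) hK⟩
  | join t₁ t₂ ih₁ ih₂ =>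
    exact ⟨ih₁ fun s hs => hz s (Or.inr (Or.inl hs)), ih₂ fun s hs => hz s (Or.inr (Or.inr hs))⟩

end RelCons

section Rationality

open Filter Topology

lemma eventually_add_mul_mem_Icc {a d : ℝ} (ha : a ∈ Set.Icc 0 1) (hd : a = 0 ∨ a = 1 → d = 0) :
    ∀ᶠ ε in 𝓝 (0 : ℝ), a + ε * d ∈ Set.Icc 0 1 := by
  by_cases h : a = 0 ∨ a = 1
  · simp [hd h, ha]
  rw [not_or] at h
  have hcont : Tendsto (fun ε : ℝ => a + ε * d) (𝓝 0) (𝓝 a) :=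
    (by fun_prop : Continuous fun ε : ℝ => a + ε * d).tendsto' 0 a (by simp)
  exact (hcont.eventually (Ioo_mem_nhds (ha.1.lt_of_ne' h.1) (ha.2.lt_of_ne h.2))).mono
    fun _ hε => Set.Ioo_subset_Icc_self hε

variable {Q : CSPInstance n} {T : NiceTree n} {f : (Fin n → Option ℝ) → ℝ}

lemma add_smul_sub_mem_Ppoly (hf : f ∈ Ppoly Q T) {g : (Fin n → Option ℝ) → ℝ}
    (hg : RelCons Q g T) (h0 : ∀ K, f K = 0 → g K = 0) (h1 : ∀ K, f K = 1 → g K = 1) :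
    ∀ᶠ ε in 𝓝 (0 : ℝ), f + ε • (g - f) ∈ Ppoly Q T := by
  obtain ⟨⟨hfRC, hfbd⟩, hf0⟩ := hf
  have hRC : ∀ ε : ℝ, RelCons Q (f + ε • (g - f)) T := fun ε => by
    convert hfRC.affineCombination (sub_add_cancel 1 ε) hg using 1
    module
  have hbd : ∀ᶠ ε in 𝓝 (0 : ℝ), ∀ K ∈ T.relConfigs Q, f K + ε * (g K - f K) ∈ Set.Icc 0 1 :=
    (eventually_all_finset _).2 fun K hK => eventually_add_mul_mem_Icc (hfbd K hK) fun h01 => by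
      rcases h01 with h | h <;> simp [h, h0, h1]
  filter_upwards [hbd] with ε hε
  exact ⟨⟨hRC ε, fun K hK => hε K hK⟩, fun K hK => by simp [hf0 K hK, h0 K (hf0 K hK)]⟩

lemma eq_of_mem_extremePoints_Ppoly (hf : f ∈ (Ppoly Q T).extremePoints ℝ)
    {g : (Fin n → Option ℝ) → ℝ} (hg : RelCons Q g T) (h0 : ∀ K, f K = 0 → g K = 0)
    (h1 : ∀ K, f K = 1 → g K = 1) : g = f := by
  have hline := add_smul_sub_mem_Ppoly hf.1 hg h0 h1
  have hneg : ∀ᶠ ε in 𝓝 (0 : ℝ), f + (-ε) • (g - f) ∈ Ppoly Q T :=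
    (continuous_neg.tendsto' (0 : ℝ) 0 neg_zero).eventually hline
  obtain ⟨ε, ⟨hpos, hminus⟩, hε⟩ :=
    ((hline.and hneg).filter_mono nhdsWithin_le_nhds |>.and self_mem_nhdsWithin).exists
      (f := 𝓝[≠] (0 : ℝ))
  have hseg : f ∈ openSegment ℝ (f + ε • (g - f)) (f + (-ε) • (g - f)) :=
    ⟨1 / 2, 1 / 2, by norm_num, by norm_num, by norm_num, by module⟩
  have hfix := hf.2 hpos hminus hseg
  rw [add_eq_left, smul_eq_zero, sub_eq_zero] at hfix
  exact hfix.resolve_left hε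

lemma isRatLinearDefinable_relCons (Q : CSPInstance n) :
    ∀ t : NiceTree n, IsRatLinearDefinable fun x => RelCons Q x t
  | .leaf v => IsRatLinearDefinable.sum_eq (configs Q {v}) 1 |>.of_iff fun x => by simp [RelCons]
  | .introduce v t => (isRatLinearDefinable_relCons Q t).and <|
      (IsRatLinearDefinable.sum_eq (configs Q (insert v t.bag)) 1 |>.of_iff fun x => by simp).and <|
      .all fun K => .all fun _ => .sum_eq_apply _ K
  | .forget v t => (isRatLinearDefinable_relCons Q t).and <|
      (IsRatLinearDefinable.sum_eq (configs Q (t.bag.erase v)) 1 |>.of_iff fun x => by simp).and <|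
      .all fun K => .all fun _ => .sum_eq_apply _ K
  | .join t₁ t₂ => (isRatLinearDefinable_relCons Q t₁).and (isRatLinearDefinable_relCons Q t₂)

lemma exists_rat_of_mem_extremePoints_Ppoly (hf : f ∈ (Ppoly Q T).extremePoints ℝ)
    (K : Fin n → Option ℝ) : ∃ q : ℚ, f K = q := by
  refine IsRatLinearDefinable.exists_rat_of_unique (P := fun g => RelCons Q g T ∧
    (∀ K, f K = 0 → g K = 0) ∧ ∀ K, f K = 1 → g K = 1) ?_ (fun g => ?_) K
  · refine (isRatLinearDefinable_relCons Q T).and <| .and (.all fun K => .all fun _ => ?_)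
      (.all fun K => .all fun _ => ?_)
    exacts [IsRatLinearDefinable.apply_eq K 0 |>.of_iff fun x => by simp,
      IsRatLinearDefinable.apply_eq K 1 |>.of_iff fun x => by simp]
  · refine ⟨fun ⟨hg, h0, h1⟩ => eq_of_mem_extremePoints_Ppoly hf hg h0 h1, ?_⟩
    rintro rfl
    exact ⟨hf.1.1.1, fun _ => id, fun _ => id⟩

end Rationality

lemma exists_pos_nat_mul_eq_natCast {ι : Type*} (s : Finset ι) (x : ι → ℝ)
    (hrat : ∀ i ∈ s, ∃ q : ℚ, x i = q) (hnonneg : ∀ i ∈ s, 0 ≤ x i) :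
    ∃ M : ℕ, 0 < M ∧ ∀ i ∈ s, ∃ k : ℕ, (M : ℝ) * x i = k := by
  classical
  induction s using Finset.induction_on with
  | empty => exact ⟨1, one_pos, by simp⟩
  | insert a s _ ih =>
    obtain ⟨M, hM, hk⟩ := ih (fun i hi => hrat i (Finset.mem_insert_of_mem hi))
      (fun i hi => hnonneg i (Finset.mem_insert_of_mem hi))
    obtain ⟨q, hq⟩ := hrat a (Finset.mem_insert_self a s)
    have hq0 : 0 ≤ q := by exact_mod_cast hq ▸ hnonneg a (Finset.mem_insert_self a s)
    refine ⟨M * q.den, Nat.mul_pos hM q.den_pos, fun i hi => ?_⟩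
    rcases Finset.mem_insert.1 hi with rfl | hi
    · refine ⟨M * q.num.toNat, ?_⟩
      calc ((M * q.den : ℕ) : ℝ) * x i = M * ((q * q.den : ℚ) : ℝ) := by
            rw [hq]; push_cast; ring
        _ = ((M * q.num.toNat : ℕ) : ℝ) := by
            rw [Rat.mul_den_eq_num, Nat.cast_mul, ← Int.cast_natCast (q.num.toNat),
              Int.toNat_of_nonneg (Rat.num_nonneg.2 hq0), Rat.cast_intCast]
    · obtain ⟨k, hk⟩ := hk i hi
      exact ⟨q.den * k, by push_cast; rw [← hk]; ring⟩

section Counting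

variable {ι α β : Type*} [Fintype ι] [DecidableEq α]

lemma exists_equiv_of_card_fiber {τ : Type*} [Fintype τ] (g : ι → α) (p : τ → α)
    (h : ∀ a, #{i | g i = a} = #{x | p x = a}) : ∃ e : ι ≃ τ, ∀ i, p (e i) = g i :=
  ⟨Equiv.ofFiberEquiv fun a => Fintype.equivOfCardEq <| by
    simpa only [Fintype.card_subtype] using h a, Equiv.ofFiberEquiv_map _⟩

lemma card_sigma_filter [DecidableEq β] (t : Finset β) (m : β → ℕ) (P : β → Prop)
    [DecidablePred P] : #{x : Σ b : t, Fin (m b) | P x.1} = ∑ b ∈ t with P b, m b := by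
  rw [Finset.card_filter, ← Finset.univ_sigma_univ, Finset.sum_sigma, Finset.sum_filter,
    ← Finset.sum_coe_sort t]
  refine Finset.sum_congr rfl fun b _ => ?_
  split_ifs <;> simp

lemma exists_refinement [DecidableEq β] (g : ι → α) (t : Finset β) (π : β → α) (m : β → ℕ)
    (hcount : ∀ a, #{i | g i = a} = ∑ b ∈ t with π b = a, m b) :
    ∃ h : ι → β, (∀ i, h i ∈ t ∧ π (h i) = g i) ∧ ∀ b ∈ t, #{i | h i = b} = m b := by
  obtain ⟨e, he⟩ := exists_equiv_of_card_fiber g (fun x : Σ b : t, Fin (m b) => π x.1)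
    fun a => (hcount a).trans (card_sigma_filter t m (π · = a)).symm
  refine ⟨fun i => (e i).1, fun i => ⟨(e i).1.2, he i⟩, fun b hb => ?_⟩
  rw [Finset.card_equiv e (t := {x | x.1.1 = b}) (fun i => by simp),
    card_sigma_filter t m (· = b), Finset.filter_eq', if_pos hb, Finset.sum_singleton]

end Counting

section Realization

variable {Q : CSPInstance n} {f : (Fin n → Option ℝ) → ℝ} {M : ℕ}

def Realizes (Q : CSPInstance n) (b : NiceTree n) (f : (Fin n → Option ℝ) → ℝ)
    (z : Fin M → Fin n → ℝ) : Prop :=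
  (∀ i, BagFeasible Q b (z i)) ∧ ∀ K ∈ b.relConfigs Q, ∑ i, charVec (z i) K = M * f K

variable {t : NiceTree n} {z : Fin M → Fin n → ℝ}

lemma Realizes.card_cfgOf_eq (hz : Realizes Q t f z) {K : Fin n → Option ℝ}
    (hK : K ∈ configs Q t.bag) : (#{i | cfgOf (z i) t.bag = K} : ℝ) = M * f K := by
  rw [← sum_charVec_eq_card hK, hz.2 K (configs_bag_subset_relConfigs Q t hK)]

lemma Realizes.card_cfgOf_eq_zero (hz : Realizes Q t f z) {K : Fin n → Option ℝ}
    (hK : K ∉ configs Q t.bag) : #{i | cfgOf (z i) t.bag = K} = 0 :=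
  Finset.card_eq_zero.2 <| Finset.filter_eq_empty_iff.2 fun i _ hi =>
    hK (hi ▸ hz.1 i t (isSubtree_self t))

lemma Realizes.of_agree (hz : Realizes Q t f z) (σ : Equiv.Perm (Fin M))
    {z' : Fin M → Fin n → ℝ} (h : ∀ i, ∀ w ∈ t.verts, z' i w = z (σ i) w) :
    Realizes Q t f z' := by
  refine ⟨fun i s hs => ?_, fun K hK => ?_⟩
  · rw [cfgOf_congr fun w hw => h i w (bag_subset_verts_of_isSubtree hs hw)]
    exact hz.1 (σ i) s hs
  · obtain ⟨s, hs, hKs⟩ := exists_isSubtree_of_mem_relConfigs hK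
    rw [← hz.2 K hK, ← Equiv.sum_comp σ fun i => charVec (z i) K]
    exact Finset.sum_congr rfl fun i _ => charVec_congr fun w hw =>
      h i w (bag_subset_verts_of_isSubtree hs (mem_of_apply_ne_none hKs hw))

lemma exists_update_cfgOf {W : Finset (Fin n)} {v : Fin n} (hv : v ∉ W)
    (z : Fin M → Fin n → ℝ) (m : (Fin n → Option ℝ) → ℕ)
    (hcount : ∀ a, #{i | cfgOf (z i) W = a} =
      ∑ K ∈ configs Q (insert v W) with restrictCfg K W = a, m K) :
    ∃ r : Fin M → ℝ,
      (∀ i, cfgOf (Function.update (z i) v (r i)) (insert v W) ∈ configs Q (insert v W)) ∧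
      ∀ K ∈ configs Q (insert v W),
        #{i | cfgOf (Function.update (z i) v (r i)) (insert v W) = K} = m K := by
  obtain ⟨h, hh, hcard⟩ := exists_refinement (fun i => cfgOf (z i) W) (configs Q (insert v W))
    (restrictCfg · W) m hcount
  have hcfg : ∀ i, cfgOf (Function.update (z i) v ((h i v).getD 0)) (insert v W) = h i := by
    intro i
    conv_rhs => rw [← cfgOf_getD (hh i).1]
    refine cfgOf_congr fun w hw => ?_
    rcases eq_or_ne w v with rfl | hwv
    · simp
    · have hwW : w ∈ W := (Finset.mem_insert.1 hw).resolve_left hwv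
      have hhw : h i w = some (z i w) := by
        simpa [restrictCfg, cfgOf, hwW] using congrFun (hh i).2 w
      simp [hwv, hhw]
  exact ⟨fun i => (h i v).getD 0, fun i => hcfg i ▸ (hh i).1,
    fun K hK => by simpa only [hcfg] using hcard K hK⟩

variable {v : Fin n}

lemma exists_realizes_leaf (hRC : RelCons Q f (leaf v)) (m : (Fin n → Option ℝ) → ℕ)
    (hm : ∀ K ∈ configs Q {v}, (M : ℝ) * f K = m K) :
    ∃ z : Fin M → Fin n → ℝ, Realizes Q (leaf v) f z := by
  have hcfg : ∀ z : Fin n → ℝ, cfgOf z ∅ = fun _ => none := fun z => funext fun w => by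
    simp [cfgOf]
  have hrestrict : ∀ K : Fin n → Option ℝ, restrictCfg K ∅ = fun _ => none := fun K =>
    funext fun w => by simp [restrictCfg]
  have hM : ∑ K ∈ configs Q {v}, m K = M := by
    have : ∑ K ∈ configs Q {v}, (m K : ℝ) = M := by
      rw [← Finset.sum_congr rfl hm, ← Finset.mul_sum, show ∑ K ∈ configs Q {v}, f K = 1 from hRC,
        mul_one]
    exact_mod_cast this
  -- A leaf introduces `v` into the empty bag.
  obtain ⟨r, hfeas, hcard⟩ := exists_update_cfgOf (Q := Q) (Finset.notMem_empty v)
    (fun _ : Fin M => 0) m fun a => by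
      rcases eq_or_ne (fun _ => none) a with rfl | ha
      · simp [hcfg, hrestrict, hM]
      · simp [hcfg, hrestrict, ha]
  rw [Finset.insert_empty] at hfeas hcard
  refine ⟨fun i => Function.update 0 v (r i), fun i s hs => ?_, fun K hK => ?_⟩
  · rw [show s = leaf v from hs]
    exact hfeas i
  · rw [sum_charVec_eq_card hK, hcard K hK, hm K hK]

lemma Realizes.exists_introduce (hz : Realizes Q t f z) (hv : v ∉ t.verts)
    (hRC : RelCons Q f (introduce v t)) (m : (Fin n → Option ℝ) → ℕ)
    (hm : ∀ K ∈ configs Q (insert v t.bag), (M : ℝ) * f K = m K) :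
    ∃ z' : Fin M → Fin n → ℝ, Realizes Q (introduce v t) f z' := by
  obtain ⟨-, -, hcons⟩ := hRC
  have hcount : ∀ a, #{i | cfgOf (z i) t.bag = a} =
      ∑ K ∈ configs Q (insert v t.bag) with restrictCfg K t.bag = a, m K := by
    intro a
    by_cases ha : a ∈ configs Q t.bag
    · have : ∑ K ∈ configs Q (insert v t.bag) with restrictCfg K t.bag = a, (m K : ℝ) =
          M * f a := by
        rw [← hcons a ha, Finset.mul_sum]
        exact Finset.sum_congr rfl fun K hK => (hm K (Finset.mem_filter.1 hK).1).symm
      exact_mod_cast (hz.card_cfgOf_eq ha).trans this.symm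
    · refine (hz.card_cfgOf_eq_zero ha).trans (Finset.sum_eq_zero fun K hK => ?_).symm
      obtain ⟨hK', rfl⟩ := Finset.mem_filter.1 hK
      exact absurd (restrictCfg_mem_configs (Finset.subset_insert v _) hK') ha
  obtain ⟨r, hfeas, hcard⟩ :=
    exists_update_cfgOf (fun h => hv (bag_subset_verts t h)) z m hcount
  have hzt : Realizes Q t f fun i => Function.update (z i) v (r i) :=
    hz.of_agree 1 fun i w hw => Function.update_of_ne (ne_of_mem_of_not_mem hw hv) _ _
  refine ⟨fun i => Function.update (z i) v (r i), fun i s hs => ?_, fun K hK => ?_⟩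
  · rcases hs with rfl | hs
    exacts [hfeas i, hzt.1 i s hs]
  · rcases Finset.mem_union.1 hK with hK | hK
    · rw [sum_charVec_eq_card hK, hcard K hK, hm K hK]
    · exact hzt.2 K hK

lemma Realizes.forget (hz : Realizes Q t f z) (hRC : RelCons Q f (forget v t)) :
    Realizes Q (forget v t) f z := by
  obtain ⟨-, -, hcons⟩ := hRC
  have hsub := Finset.erase_subset v t.bag
  have hroot : ∀ i, cfgOf (z i) t.bag ∈ configs Q t.bag := fun i => hz.1 i t (isSubtree_self t)
  refine ⟨fun i s hs => ?_, fun K hK => ?_⟩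
  · rcases hs with rfl | hs
    · show cfgOf (z i) (t.bag.erase v) ∈ configs Q (t.bag.erase v)
      rw [← restrictCfg_cfgOf hsub]
      exact restrictCfg_mem_configs hsub (hroot i)
    · exact hz.1 i s hs
  rcases Finset.mem_union.1 hK with hK | hK
  · calc ∑ i, charVec (z i) K
        = ∑ i, ∑ K' ∈ configs Q t.bag with restrictCfg K' (t.bag.erase v) = K,
            charVec (z i) K' :=
          Finset.sum_congr rfl fun i _ => (sum_charVec_restrict hsub (hroot i) hK).symm
      _ = ∑ K' ∈ configs Q t.bag with restrictCfg K' (t.bag.erase v) = K, M * f K' := by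
          rw [Finset.sum_comm]
          exact Finset.sum_congr rfl fun K' hK' =>
            hz.2 K' (configs_bag_subset_relConfigs Q t (Finset.mem_filter.1 hK').1)
      _ = M * f K := by rw [← Finset.mul_sum, hcons K hK]
  · exact hz.2 K hK

lemma Realizes.exists_join {t₁ t₂ : NiceTree n} {z₁ z₂ : Fin M → Fin n → ℝ}
    (hz₁ : Realizes Q t₁ f z₁) (hz₂ : Realizes Q t₂ f z₂) (hbag : t₁.bag = t₂.bag)
    (hcap : t₁.verts ∩ t₂.verts ⊆ t₁.bag) :
    ∃ z : Fin M → Fin n → ℝ, Realizes Q (join t₁ t₂) f z := by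
  have hcount : ∀ a, #{i | cfgOf (z₁ i) t₁.bag = a} = #{i | cfgOf (z₂ i) t₁.bag = a} := by
    intro a
    by_cases ha : a ∈ configs Q t₁.bag
    · have h₂ := hz₂.card_cfgOf_eq (hbag ▸ ha)
      rw [← hbag] at h₂
      exact_mod_cast (hz₁.card_cfgOf_eq ha).trans h₂.symm
    · have h₂ := hz₂.card_cfgOf_eq_zero (hbag ▸ ha)
      rw [← hbag] at h₂
      rw [hz₁.card_cfgOf_eq_zero ha, h₂]
  obtain ⟨σ, hσ⟩ := exists_equiv_of_card_fiber _ _ hcount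
  let z : Fin M → Fin n → ℝ := fun i w => if w ∈ t₁.verts then z₁ i w else z₂ (σ i) w
  have hz₁' : Realizes Q t₁ f z := hz₁.of_agree 1 fun i w hw => if_pos hw
  have hz₂' : Realizes Q t₂ f z := hz₂.of_agree σ fun i w hw => by
    by_cases hw₁ : w ∈ t₁.verts
    · have hwB : w ∈ t₁.bag := hcap (Finset.mem_inter.2 ⟨hw₁, hw⟩)
      have hw := congrFun (hσ i) w
      simp only [cfgOf, hwB, if_true, Option.some_inj] at hw
      simp [z, hw₁, hw]
    · simp [z, hw₁]
  refine ⟨z, fun i s hs => ?_, fun K hK => ?_⟩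
  · rcases hs with rfl | hs | hs
    exacts [hz₁'.1 i t₁ (isSubtree_self _), hz₁'.1 i s hs, hz₂'.1 i s hs]
  · rcases Finset.mem_union.1 hK with hK | hK
    exacts [hz₁'.2 K hK, hz₂'.2 K hK]

theorem exists_realizes {b : NiceTree n} (hval : b.valid) (hRC : RelCons Q f b)
    (m : (Fin n → Option ℝ) → ℕ) (hm : ∀ K ∈ b.relConfigs Q, (M : ℝ) * f K = m K) :
    ∃ z : Fin M → Fin n → ℝ, Realizes Q b f z := by
  induction b with
  | leaf v => exact exists_realizes_leaf hRC m hm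
  | introduce v t ih =>
    obtain ⟨z, hz⟩ := ih hval.2 hRC.1 fun K hK => hm K (Finset.mem_union_right _ hK)
    exact hz.exists_introduce hval.1 hRC m fun K hK => hm K (Finset.mem_union_left _ hK)
  | forget v t ih =>
    obtain ⟨z, hz⟩ := ih hval.2 hRC.1 fun K hK => hm K (Finset.mem_union_right _ hK)
    exact ⟨z, hz.forget hRC⟩
  | join t₁ t₂ ih₁ ih₂ =>
    obtain ⟨z₁, hz₁⟩ := ih₁ hval.2.2.1 hRC.1 fun K hK => hm K (Finset.mem_union_left _ hK)
    obtain ⟨z₂, hz₂⟩ := ih₂ hval.2.2.2 hRC.2 fun K hK => hm K (Finset.mem_union_right _ hK)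
    exact hz₁.exists_join hz₂ hval.1 hval.2.1

end Realization

lemma relevantLP_charVec {Q : CSPInstance n} {b : NiceTree n} {z : Fin n → ℝ}
    (hz : BagFeasible Q b z) : RelevantLP Q b (charVec z) :=
  ⟨relCons_charVec hz, fun K _ => by rcases charVec_eq_zero_or_one z K with h | h <;> simp [h]⟩

/-- Every vertex (extreme point) `f` of `P(Q)` is, on the
coordinates relevant to any node `b` of `T`, an average of `M` binary vectors
each satisfying the constraints relevant to `T(b)`. -/
theorem vertex_is_average_of_binary (n : ℕ) (Q : CSPInstance n) (T : NiceTree n)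
    (hT : IsNiceTreeDecompCSP Q T) (f : (Fin n → Option ℝ) → ℝ)
    (hf : f ∈ Set.extremePoints ℝ (Ppoly Q T))
    (b : NiceTree n) (hb : b.isSubtree T) :
    ∃ M : ℕ, 0 < M ∧ ∃ I : Fin M → ((Fin n → Option ℝ) → ℝ),
      (∀ i, (∀ K, I i K = 0 ∨ I i K = 1) ∧ RelevantLP Q b (I i)) ∧
      ∀ K ∈ b.relConfigs Q, f K = (1 / (M : ℝ)) * ∑ i, I i K := by
  obtain ⟨⟨hfRC, hfbd⟩, -⟩ := hf.1
  obtain ⟨M, hM, hint⟩ := exists_pos_nat_mul_eq_natCast (T.relConfigs Q) f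
    (fun K _ => exists_rat_of_mem_extremePoints_Ppoly hf K) (fun K hK => (hfbd K hK).1)
  choose! m hm using hint
  obtain ⟨z, hzfeas, hzcount⟩ := exists_realizes (valid_of_isSubtree hb hT.1)
    (hfRC.of_isSubtree hb) m fun K hK => hm K (relConfigs_subset_of_isSubtree hb hK)
  refine ⟨M, hM, fun i => charVec (z i),
    fun i => ⟨charVec_eq_zero_or_one (z i), relevantLP_charVec (hzfeas i)⟩, fun K hK => ?_⟩
  rw [hzcount K hK]
  field_simp
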